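/- arXiv:2010.04615 — 2 statements merged into one kernel-verified Lean document; each statement's English description precedes it below -/
import Mathlib

section
/- Let Ω ⊂ ℝ³ be a bounded open set and let w : Ω → ℝ³ be a C¹ vector field vanishing on ∂Ω. Let e_i be a standard basis vector of ℝ³. Then the EMAC trilinear form satisfies c(w, w, e_i) = 2∫_Ω (D(w)w)·e_i dx + ∫_Ω (div w)(w·e_i) dx = 0, even if div w ≠ 0. -/
open Real MeasureTheory

/-- `(∇u)_{ij} = ∂_j u_i` : entry of the Jacobian of a vector field. -/
noncomputable def gradEntry {d : ℕ} (u : (Fin d → ℝ) → Fin d → ℝ) (i j : Fin d)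
    (x : Fin d → ℝ) : ℝ := fderiv ℝ (fun y => u y i) x (Pi.single j 1)

/-- divergence of a vector field. -/
noncomputable def divg {d : ℕ} (u : (Fin d → ℝ) → Fin d → ℝ) (x : Fin d → ℝ) : ℝ :=
  ∑ j, gradEntry u j j x

/-- `D(u)_{ij}`, the symmetric part of the Jacobian. -/
noncomputable def symGrad {d : ℕ} (u : (Fin d → ℝ) → Fin d → ℝ) (i j : Fin d)
    (x : Fin d → ℝ) : ℝ := (1/2) * (gradEntry u i j x + gradEntry u j i x)

/-- The EMAC trilinear form `c(u,v,w) = 2∫_Ω (D(u)v)·w + ∫_Ω (div u)(v·w)`. -/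
noncomputable def emacC {d : ℕ} (Ω : Set (Fin d → ℝ))
    (u v w : (Fin d → ℝ) → Fin d → ℝ) : ℝ :=
  2 * (∫ x in Ω, ∑ i, (∑ j, symGrad u i j x * v x j) * w x i)
    + ∫ x in Ω, divg u x * ∑ i, v x i * w x i

/-- Auxiliary vector field `F_j = w_i w_j + δ_{ji} |w|²/2` whose divergence is
the EMAC integrand. -/
noncomputable def auxF (w : (Fin 3 → ℝ) → Fin 3 → ℝ) (i : Fin 3) (x : Fin 3 → ℝ) :
    Fin 3 → ℝ := fun j =>
  w x i * w x j + (if j = i then (1:ℝ) else 0) * ((1/2 : ℝ) * ∑ k, w x k * w x k)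

/-- Derivative of the `j`-th component of `auxF`. -/
noncomputable def auxD (w : (Fin 3 → ℝ) → Fin 3 → ℝ) (i j : Fin 3) (x : Fin 3 → ℝ) :
    (Fin 3 → ℝ) →L[ℝ] ℝ :=
  (w x i • fderiv ℝ (fun y => w y j) x + w x j • fderiv ℝ (fun y => w y i) x) +
    (if j = i then (1:ℝ) else 0) • ((1/2 : ℝ) •
      ∑ k, (w x k • fderiv ℝ (fun y => w y k) x + w x k • fderiv ℝ (fun y => w y k) x))

lemma auxF_hasFDerivAt {w : (Fin 3 → ℝ) → Fin 3 → ℝ} (hw : ContDiff ℝ 1 w)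
    (i : Fin 3) (x : Fin 3 → ℝ) :
    HasFDerivAt (auxF w i) (ContinuousLinearMap.pi fun j => auxD w i j x) x := by
  rw [show auxF w i = (fun x j => (fun j x => auxF w i x j) j x) from rfl, hasFDerivAt_pi]
  intro j
  have hd : ∀ k, HasFDerivAt (fun y => w y k) (fderiv ℝ (fun y => w y k) x) x := fun k =>
    ((contDiff_pi.mp hw k).differentiable one_ne_zero x).hasFDerivAt
  exact ((hd i).mul (hd j)).add
    (((HasFDerivAt.fun_sum fun k _ => (hd k).mul (hd k)).const_mul ((1:ℝ)/2)).const_mul _)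

lemma abs_auxF_le {w : (Fin 3 → ℝ) → Fin 3 → ℝ} {i : Fin 3} {x : Fin 3 → ℝ} {M : ℝ}
    (hM : ∀ k, |w x k| ≤ M) (j : Fin 3) : |auxF w i x j| ≤ 5/2 * (M * M) := by
  have hM0 : 0 ≤ M := (abs_nonneg _).trans (hM i)
  have hab : |w x i * w x j| ≤ M * M := by
    rw [abs_mul]
    exact mul_le_mul (hM i) (hM j) (abs_nonneg _) hM0
  have hS : ∀ k, w x k * w x k ≤ M * M := fun k => by
    have := mul_le_mul (hM k) (hM k) (abs_nonneg _) hM0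
    nlinarith [abs_mul_abs_self (w x k)]
  have hS0 : ∀ k : Fin 3, 0 ≤ w x k * w x k := fun k => mul_self_nonneg _
  unfold auxF
  split_ifs with h
  · rw [one_mul]
    refine (abs_add_le _ _).trans ?_
    have h1 : |(1/2 : ℝ) * ∑ k, w x k * w x k| ≤ (1/2) * (3 * (M*M)) := by
      rw [abs_mul, abs_of_nonneg (Finset.sum_nonneg fun k _ => hS0 k)]
      have h2 : (∑ k, w x k * w x k) ≤ 3 * (M*M) := by
        rw [Fin.sum_univ_three]
        linarith [hS 0, hS 1, hS 2]
      have h3 : |(1/2 : ℝ)| = 1/2 := by norm_num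
      rw [h3]
      linarith
    linarith
  · simp only [zero_mul, add_zero]
    nlinarith

/-- Momentum conservation of the EMAC nonlinearity: `c(w, w, e_i) = 0` even when
`div w ≠ 0`, for `w` a C¹ field vanishing on `∂Ω` and `e_i` a standard basis vector. -/
theorem stmt5 (Ω : Set (Fin 3 → ℝ)) (hΩo : IsOpen Ω)
    (hΩb : Bornology.IsBounded Ω)
    (w : (Fin 3 → ℝ) → Fin 3 → ℝ) (hw : ContDiff ℝ 1 w)
    (hwb : ∀ x ∈ frontier Ω, w x = 0) (i : Fin 3) :
    emacC Ω w w (fun _ => Pi.single i (1 : ℝ)) = 0 := by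
  classical
  -- basic continuity facts
  have hwc : ∀ k, Continuous fun x => w x k := fun k => (contDiff_pi.mp hw k).continuous
  have hG : ∀ k j, Continuous fun x => fderiv ℝ (fun y => w y k) x (Pi.single j 1) :=
    fun k j => ((contDiff_pi.mp hw k).continuous_fderiv one_ne_zero).clm_apply continuous_const
  -- the extended vector field and its derivative
  set f : (Fin 3 → ℝ) → Fin 3 → ℝ := fun x => if x ∈ Ω then auxF w i x else 0 with hf
  set f' : (Fin 3 → ℝ) → (Fin 3 → ℝ) →L[ℝ] (Fin 3 → ℝ) := fun x =>
    if x ∈ Ω then ContinuousLinearMap.pi fun j => auxD w i j x else 0 with hf'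
  -- differentiability of f everywhere
  have hdf : ∀ x, HasFDerivAt f (f' x) x := by
    intro x
    by_cases hx : x ∈ Ω
    · have : f =ᶠ[nhds x] auxF w i := by
        filter_upwards [hΩo.mem_nhds hx] with y hy
        simp [hf, hy]
      simp only [hf', if_pos hx]
      exact (auxF_hasFDerivAt hw i x).congr_of_eventuallyEq this
    by_cases hx' : x ∈ closure Ω
    · -- frontier point
      have hxf : x ∈ frontier Ω := ⟨hx', by rwa [hΩo.interior_eq]⟩
      have hw0 : w x = 0 := hwb x hxf
      have hfx : f x = 0 := by simp [hf, hx]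
      simp only [hf', if_neg hx]
      obtain ⟨K, t, ht, hK⟩ := (hw.contDiffAt (x := x)).exists_lipschitzOnWith
      rw [hasFDerivAt_iff_isLittleO_nhds_zero]
      have hxt : x ∈ t := mem_of_mem_nhds ht
      have hO : (fun h => f (x + h) - f x - (0 : (Fin 3 → ℝ) →L[ℝ] (Fin 3 → ℝ)) h)
          =O[nhds 0] fun h : Fin 3 → ℝ => ‖h‖ * ‖h‖ := by
        rw [Asymptotics.isBigO_iff]
        refine ⟨5/2 * (K * K), ?_⟩
        have htt : {h : Fin 3 → ℝ | x + h ∈ t} ∈ nhds (0 : Fin 3 → ℝ) := by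
          have : Continuous fun h : Fin 3 → ℝ => x + h := continuous_const.add continuous_id
          have := this.continuousAt (x := 0) |>.preimage_mem_nhds (by simpa using ht)
          exact this
        filter_upwards [htt] with h hh
        rw [hfx, ContinuousLinearMap.zero_apply, sub_zero, sub_zero]
        by_cases hmem : x + h ∈ Ω
        · have hfv : f (x + h) = auxF w i (x + h) := by simp [hf, hmem]
          rw [hfv]
          have hwle : ‖w (x + h)‖ ≤ K * ‖h‖ := by
            have := hK.dist_le_mul (x + h) hh x hxt
            rw [hw0] at this
            simpa [dist_eq_norm] using this
          have hMk : ∀ k, |w (x+h) k| ≤ K * ‖h‖ := fun k => by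
            have h1 : ‖w (x+h) k‖ ≤ ‖w (x+h)‖ := norm_le_pi_norm _ k
            rw [Real.norm_eq_abs] at h1
            exact h1.trans hwle
          have hb := fun j => abs_auxF_le (i := i) hMk j
          have : ‖auxF w i (x + h)‖ ≤ 5/2 * ((K * ‖h‖) * (K * ‖h‖)) := by
            refine (pi_norm_le_iff_of_nonneg (by positivity)).mpr fun j => ?_
            rw [Real.norm_eq_abs]; exact hb j
          refine this.trans ?_
          rw [Real.norm_eq_abs, abs_of_nonneg (by positivity)]
          ring_nf
          nlinarith [norm_nonneg h, NNReal.coe_nonneg K]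
        · simp only [hf, if_neg hmem, norm_zero]
          positivity
      have ho : (fun h : Fin 3 → ℝ => ‖h‖ * ‖h‖) =o[nhds 0] fun h : Fin 3 → ℝ => h := by
        rw [Asymptotics.isLittleO_iff]
        intro c hc
        filter_upwards [Metric.ball_mem_nhds (0 : Fin 3 → ℝ) hc] with h hh
        rw [Metric.mem_ball, dist_zero_right] at hh
        rw [Real.norm_eq_abs, abs_of_nonneg (by positivity)]
        nlinarith [norm_nonneg h]
      exact hO.trans_isLittleO ho
    · -- exterior point
      have hmem : (closure Ω)ᶜ ∈ nhds x := isClosed_closure.isOpen_compl.mem_nhds hx'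
      have hzero : f =ᶠ[nhds x] fun _ => (0 : Fin 3 → ℝ) := by
        filter_upwards [hmem] with y hy
        have : y ∉ Ω := fun h => hy (subset_closure h)
        simp [hf, this]
      simp only [hf', if_neg hx]
      exact (hasFDerivAt_const (0 : Fin 3 → ℝ) x).congr_of_eventuallyEq hzero
  -- the divergence of auxF
  set gdiv : (Fin 3 → ℝ) → ℝ := fun x => ∑ j, auxD w i j x (Pi.single j 1) with hgdiv
  have hgdivval : ∀ x j, auxD w i j x (Pi.single j 1)
      = w x i * gradEntry w j j x + w x j * gradEntry w i j x
        + (if j = i then (1:ℝ) else 0) * ((1/2) * ∑ k, (w x k * gradEntry w k j x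
            + w x k * gradEntry w k j x)) := by
    intro x j
    unfold auxD gradEntry
    split_ifs with h <;>
      simp [ContinuousLinearMap.sum_apply, smul_eq_mul, Finset.mul_sum]
  have hgcont : Continuous gdiv := by
    refine continuous_finset_sum _ fun j _ => ?_
    have : (fun x => auxD w i j x (Pi.single j 1)) = fun x =>
        w x i * gradEntry w j j x + w x j * gradEntry w i j x
        + (if j = i then (1:ℝ) else 0) * ((1/2) * ∑ k, (w x k * gradEntry w k j x
            + w x k * gradEntry w k j x)) := funext fun x => hgdivval x j
    rw [this]
    have hGE : ∀ k j, Continuous fun x => gradEntry w k j x := fun k j => hG k j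
    exact (((hwc i).mul (hGE j j)).add ((hwc j).mul (hGE i j))).add
      (continuous_const.mul (continuous_const.mul (continuous_finset_sum _ fun k _ =>
        ((hwc k).mul (hGE k j)).add ((hwc k).mul (hGE k j)))))
  -- set up the box
  obtain ⟨r, hr⟩ := hΩb.subset_closedBall 0
  set a : Fin 3 → ℝ := fun _ => -(|r| + 1) with ha
  set b : Fin 3 → ℝ := fun _ => |r| + 1 with hb
  have hle : a ≤ b := fun j => by simp only [ha, hb]; linarith [abs_nonneg r]
  have hnorm_le : ∀ x ∈ Ω, ‖x‖ ≤ r := fun x hx => by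
    have := hr hx
    rwa [Metric.mem_closedBall, dist_zero_right] at this
  have hΩsub : Ω ⊆ Set.Icc a b := by
    intro x hx
    have h1 : ∀ j, |x j| ≤ |r| := fun j => by
      rw [← Real.norm_eq_abs]
      exact (norm_le_pi_norm x j).trans ((hnorm_le x hx).trans (le_abs_self r))
    constructor <;> intro j
    · have := (abs_le.mp (h1 j)).1
      simp only [ha]
      linarith
    · have := (abs_le.mp (h1 j)).2
      simp only [hb]
      linarith
  have hface : ∀ (y : Fin 3 → ℝ) (j : Fin 3), |y j| = |r| + 1 → f y = 0 := by
    intro y j hy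
    have : y ∉ Ω := by
      intro hmem
      have h1 : |y j| ≤ ‖y‖ := by rw [← Real.norm_eq_abs]; exact norm_le_pi_norm y j
      have h2 := hnorm_le y hmem
      have := le_abs_self r
      rw [hy] at h1
      linarith
    simp [hf, this]
  -- indicator identity for the divergence
  have hindic : ∀ x, (∑ j, f' x (Pi.single j 1) j) = Ω.indicator gdiv x := by
    intro x
    by_cases hx : x ∈ Ω
    · simp [hf', if_pos hx, Set.indicator_of_mem hx, hgdiv, ContinuousLinearMap.pi_apply]
    · simp [hf', if_neg hx, Set.indicator_of_notMem hx]
  -- integrability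
  have hInd : IntegrableOn (Ω.indicator gdiv) (Set.Icc a b) := by
    have h1 : IntegrableOn gdiv (Set.Icc a b) :=
      hgcont.continuousOn.integrableOn_compact isCompact_Icc
    exact (h1.indicator hΩo.measurableSet).mono_set le_rfl
  have hIndicInt : IntegrableOn (fun x => ∑ j, f' x (Pi.single j 1) j) (Set.Icc a b) := by
    have : (fun x => ∑ j, f' x (Pi.single j 1) j) = Ω.indicator gdiv := funext hindic
    rw [this]; exact hInd
  -- divergence theorem
  have hdivthm := MeasureTheory.integral_divergence_of_hasFDerivAt_off_countable
    (a := a) (b := b) hle f f' ∅ Set.countable_empty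
    (continuous_iff_continuousAt.mpr fun x => (hdf x).continuousAt).continuousOn
    (fun x _ => hdf x) hIndicInt
  -- the right-hand side is zero
  have hRHS : (∑ j : Fin 3,
      ((∫ x in Set.Icc (a ∘ Fin.succAbove j) (b ∘ Fin.succAbove j),
          f (Fin.insertNth j (b j) x) j) -
        ∫ x in Set.Icc (a ∘ Fin.succAbove j) (b ∘ Fin.succAbove j),
          f (Fin.insertNth j (a j) x) j)) = 0 := by
    refine Finset.sum_eq_zero fun j _ => ?_
    have h1 : ∀ y : Fin 2 → ℝ, f (Fin.insertNth j (b j) y) j = 0 := fun y => by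
      rw [hface _ j (by
        simp only [Fin.insertNth_apply_same, hb]
        rw [abs_of_nonneg (by positivity)])]; rfl
    have h2 : ∀ y : Fin 2 → ℝ, f (Fin.insertNth j (a j) y) j = 0 := fun y => by
      rw [hface _ j (by
        simp only [Fin.insertNth_apply_same, ha]
        rw [abs_neg, abs_of_nonneg (by positivity)])]; rfl
    simp only [h1, h2, integral_zero, sub_zero]
  -- so the integral of the divergence over Ω is zero
  have hIcc : ∫ x in Set.Icc a b, ∑ j, f' x (Pi.single j 1) j = 0 := by
    rw [hdivthm]; exact hRHS
  have hΩint : ∫ x in Ω, gdiv x = 0 := by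
    have h1 : ∫ x in Set.Icc a b, ∑ j, f' x (Pi.single j 1) j
        = ∫ x in Set.Icc a b, Ω.indicator gdiv x := by
      congr 1; exact funext hindic
    have h2 : ∫ x in Set.Icc a b, Ω.indicator gdiv x = ∫ x in Set.Icc a b ∩ Ω, gdiv x :=
      setIntegral_indicator hΩo.measurableSet
    have h3 : Set.Icc a b ∩ Ω = Ω := Set.inter_eq_self_of_subset_right hΩsub
    rw [h1, h2, h3] at hIcc
    exact hIcc
  -- identify the EMAC integrand with gdiv
  set A : (Fin 3 → ℝ) → ℝ := fun x =>
    ∑ k, (∑ j, symGrad w k j x * w x j) * (Pi.single i (1:ℝ) : Fin 3 → ℝ) k with hA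
  set B : (Fin 3 → ℝ) → ℝ := fun x =>
    divg w x * ∑ k, w x k * (Pi.single i (1:ℝ) : Fin 3 → ℝ) k with hB
  have hpt : ∀ x, 2 * A x + B x = gdiv x := by
    intro x
    simp only [hgdiv]
    rw [Fin.sum_univ_three (f := fun j => auxD w i j x (Pi.single j 1))]
    rw [hgdivval x 0, hgdivval x 1, hgdivval x 2]
    simp only [hA, hB, divg, symGrad]
    fin_cases i <;>
      simp [Fin.sum_univ_three, Pi.single_apply] <;> ring
  -- continuity and integrability of A and B
  have hsymc : ∀ k j, Continuous fun x => symGrad w k j x := fun k j => by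
    unfold symGrad gradEntry
    exact continuous_const.mul ((hG k j).add (hG j k))
  have hAc : Continuous A := by
    refine continuous_finset_sum _ fun k _ => Continuous.mul ?_ continuous_const
    exact continuous_finset_sum _ fun j _ => (hsymc k j).mul (hwc j)
  have hBc : Continuous B := by
    refine Continuous.mul ?_ ?_
    · exact continuous_finset_sum _ fun j _ => hG j j
    · exact continuous_finset_sum _ fun k _ => (hwc k).mul continuous_const
  have hcomp : IsCompact (closure Ω) := hΩb.isCompact_closure
  have hAi : IntegrableOn A Ω :=
    (hAc.continuousOn.integrableOn_compact hcomp).mono_set subset_closure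
  have hBi : IntegrableOn B Ω :=
    (hBc.continuousOn.integrableOn_compact hcomp).mono_set subset_closure
  -- conclude
  have hsplit : emacC Ω w w (fun _ => Pi.single i (1 : ℝ)) = ∫ x in Ω, (2 * A x + B x) := by
    rw [integral_add ((hAi.const_mul 2)) hBi, integral_const_mul]
    rfl
  rw [hsplit]
  have : ∫ x in Ω, (2 * A x + B x) = ∫ x in Ω, gdiv x := by
    congr 1; exact funext hpt
  rw [this, hΩint]
end

section
/- Let Ω ⊂ ℝ³ be a bounded open set and let w : Ω → ℝ³ be a C¹ vector field vanishing on ∂Ω. For i ∈ {1,2,3} let φ_i(x) = x × e_i, where e_i is the i-th standard basis vector. Then c(w, w, φ_i) = 2∫_Ω (D(w)w)·φ_i dx + ∫_Ω (div w)(w·φ_i) dx = 0, even if div w ≠ 0. -/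
open Real MeasureTheory

/-! With `F := (w·φ) w + ½|w|² φ` one computes
`div F = 2 (D(w)w)·φ + (div w)(w·φ) + w·(∇φ)w + ½|w|² div φ`, and the last two terms vanish
because `∇φ` is skew-symmetric; hence `c(w, w, φ) = ∫_Ω div F`. Since `F` is quadratic in `w`,
both `F` and its derivative vanish on `∂Ω`, so the extension of `F` by zero is differentiable on
all of `ℝ³` with bounded support, and the integral of its divergence is zero. -/

open Matrix

theorem hasFDerivAt_indicator_of_hasFDerivAt_zero {E F : Type*} [NormedAddCommGroup E]
    [NormedSpace ℝ E] [NormedAddCommGroup F] [NormedSpace ℝ F] {f : E → F} {x : E}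
    (hf : HasFDerivAt f (0 : E →L[ℝ] F) x) (hfx : f x = 0) (s : Set E) :
    HasFDerivAt (s.indicator f) (0 : E →L[ℝ] F) x := by
  rw [hasFDerivAt_iff_isLittleO_nhds_zero] at hf ⊢
  simp only [hfx, Set.indicator_apply_eq_zero.2 fun _ => hfx, _root_.zero_apply,
    sub_zero] at hf ⊢
  refine Asymptotics.IsBigO.trans_isLittleO ?_ hf
  exact Asymptotics.isBigO_of_le _ fun h => by simpa using norm_indicator_le_norm_self f (x + h)

theorem hasFDerivAt_indicator_of_frontier {E F : Type*} [NormedAddCommGroup E]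
    [NormedSpace ℝ E] [NormedAddCommGroup F] [NormedSpace ℝ F] {f : E → F} {Ω : Set E}
    (hΩ : IsOpen Ω) (hf : Differentiable ℝ f) (hf0 : ∀ x ∈ frontier Ω, f x = 0)
    (hf'0 : ∀ x ∈ frontier Ω, fderiv ℝ f x = 0) (x : E) :
    HasFDerivAt (Ω.indicator f) (Ω.indicator (fderiv ℝ f) x) x := by
  by_cases hx : x ∈ Ω
  · rw [Set.indicator_of_mem hx]
    refine (hf x).hasFDerivAt.congr_of_eventuallyEq ?_
    filter_upwards [hΩ.mem_nhds hx] with y hy using Set.indicator_of_mem hy f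
  rw [Set.indicator_of_notMem hx]
  by_cases hcl : x ∈ closure Ω
  · have hfr : x ∈ frontier Ω := ⟨hcl, fun h => hx (interior_subset h)⟩
    exact hasFDerivAt_indicator_of_hasFDerivAt_zero (hf'0 x hfr ▸ (hf x).hasFDerivAt)
      (hf0 x hfr) Ω
  · refine (hasFDerivAt_const 0 x).congr_of_eventuallyEq ?_
    filter_upwards [isClosed_closure.isOpen_compl.mem_nhds hcl] with y hy
    exact Set.indicator_of_notMem (fun h => hy (subset_closure h)) f

theorem Continuous.integrableOn_of_isBounded {X E : Type*} [MetricSpace X] [ProperSpace X]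
    [MeasurableSpace X] [OpensMeasurableSpace X] {μ : Measure X} [IsFiniteMeasureOnCompacts μ]
    [NormedAddCommGroup E] {f : X → E} (hf : Continuous f) {s : Set X}
    (hs : Bornology.IsBounded s) : IntegrableOn f s μ :=
  (hf.continuousOn.integrableOn_compact hs.isCompact_closure).mono_set subset_closure

section DotProduct

variable {ι : Type*} [Fintype ι]

theorem sum_smul_apply_single [DecidableEq ι] {M : Type*} [AddCommGroup M] [Module ℝ M]
    [TopologicalSpace M] (L : (ι → ℝ) →L[ℝ] M) (v : ι → ℝ) :
    ∑ j, v j • L (Pi.single j 1) = L v := by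
  conv_rhs => rw [pi_eq_sum_univ' v]
  simp only [map_sum, map_smul]

theorem sum_apply_single_apply_mul [DecidableEq ι] (L : (ι → ℝ) →L[ℝ] (ι → ℝ))
    (v : ι → ℝ) (i : ι) : ∑ j, L (Pi.single j 1) i * v j = L v i := by
  simp only [← sum_smul_apply_single L v, Finset.sum_apply, Pi.smul_apply, smul_eq_mul, mul_comm]

theorem sum_apply_single_dotProduct_mul [DecidableEq ι] (L : (ι → ℝ) →L[ℝ] (ι → ℝ))
    (u v : ι → ℝ) : ∑ j, (L (Pi.single j 1) ⬝ᵥ u) * v j = L v ⬝ᵥ u := by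
  simp only [← sum_smul_apply_single L v, sum_dotProduct, smul_dotProduct, smul_eq_mul, mul_comm]

theorem sum_dotProduct_apply_single_mul [DecidableEq ι] (L : (ι → ℝ) →L[ℝ] (ι → ℝ))
    (u v : ι → ℝ) : ∑ j, (u ⬝ᵥ L (Pi.single j 1)) * v j = u ⬝ᵥ L v := by
  simp only [← sum_smul_apply_single L v, dotProduct_sum, dotProduct_smul, smul_eq_mul, mul_comm]

variable {E : Type*} [NormedAddCommGroup E] [NormedSpace ℝ E] {f g : E → ι → ℝ} {x : E}

theorem HasFDerivAt.dotProduct {f' g' : E →L[ℝ] ι → ℝ} (hf : HasFDerivAt f f' x)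
    (hg : HasFDerivAt g g' x) :
    HasFDerivAt (fun y => f y ⬝ᵥ g y)
      (∑ k, (f x k • (ContinuousLinearMap.proj k ∘L g') +
        g x k • (ContinuousLinearMap.proj k ∘L f'))) x :=
  HasFDerivAt.fun_sum fun k _ => (hasFDerivAt_pi'.1 hf k).mul (hasFDerivAt_pi'.1 hg k)

theorem DifferentiableAt.dotProduct (hf : DifferentiableAt ℝ f x)
    (hg : DifferentiableAt ℝ g x) : DifferentiableAt ℝ (fun y => f y ⬝ᵥ g y) x :=
  (hf.hasFDerivAt.dotProduct hg.hasFDerivAt).differentiableAt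

theorem fderiv_dotProduct_apply (hf : DifferentiableAt ℝ f x) (hg : DifferentiableAt ℝ g x)
    (v : E) : fderiv ℝ (fun y => f y ⬝ᵥ g y) x v =
      fderiv ℝ f x v ⬝ᵥ g x + f x ⬝ᵥ fderiv ℝ g x v := by
  rw [(hf.hasFDerivAt.dotProduct hg.hasFDerivAt).fderiv]
  simp only [FunLike.coe_sum, Finset.sum_apply, _root_.add_apply, _root_.smul_apply,
    ContinuousLinearMap.comp_apply, ContinuousLinearMap.proj_apply, smul_eq_mul,
    Finset.sum_add_distrib, dotProduct]
  rw [add_comm]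
  simp only [mul_comm (g x _)]

end DotProduct

section Divergence

variable {n : ℕ} {F : (Fin n → ℝ) → Fin n → ℝ} {x : Fin n → ℝ} {Ω : Set (Fin n → ℝ)}

theorem gradEntry_eq_fderiv_apply (hF : DifferentiableAt ℝ F x) (i j : Fin n) :
    gradEntry F i j x = fderiv ℝ F x (Pi.single j 1) i := by
  rw [gradEntry, fderiv_apply hF]
  rfl

theorem divg_eq_sum_fderiv_apply (hF : DifferentiableAt ℝ F x) :
    divg F x = ∑ j, fderiv ℝ F x (Pi.single j 1) j := by
  simp only [divg, gradEntry_eq_fderiv_apply hF]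

theorem continuous_gradEntry (hF : ContDiff ℝ 1 F) (i j : Fin n) :
    Continuous (gradEntry F i j) := by
  rw [funext fun x => gradEntry_eq_fderiv_apply (hF.differentiable one_ne_zero x) i j]
  exact (continuous_apply i).comp ((hF.continuous_fderiv one_ne_zero).clm_apply continuous_const)

theorem integral_divg_eq_zero (hF : Differentiable ℝ F) (hFi : Integrable F)
    (hdiv : ∀ j, Integrable (gradEntry F j j)) : ∫ x, divg F x = 0 := by
  unfold divg
  rw [integral_finsetSum _ fun j _ => hdiv j]
  refine Finset.sum_eq_zero fun j _ => ?_
  have hdivj : Integrable fun x => gradEntry F j j x := hdiv j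
  -- integration by parts against the constant function `1`
  have := integral_mul_fderiv_eq_neg_fderiv_mul_of_integrable
    (f := fun _ => (1 : ℝ)) (g := fun x => F x j) (v := Pi.single j 1)
    (by simp) (by simpa only [one_mul, gradEntry] using hdivj) (by simpa using hFi.eval j)
    (fun x _ => differentiableAt_const _) (fun x _ => differentiableAt_pi.1 (hF x) j)
  simpa [gradEntry] using this

theorem gradEntry_indicator (hΩ : IsOpen Ω) (hF : Differentiable ℝ F)
    (hF0 : ∀ x ∈ frontier Ω, F x = 0) (hF'0 : ∀ x ∈ frontier Ω, fderiv ℝ F x = 0) (i j : Fin n) :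
    gradEntry (Ω.indicator F) i j = Ω.indicator (gradEntry F i j) := by
  funext x
  have hG := hasFDerivAt_indicator_of_frontier hΩ hF hF0 hF'0 x
  rw [gradEntry_eq_fderiv_apply hG.differentiableAt, hG.fderiv]
  by_cases hx : x ∈ Ω <;> simp [hx, gradEntry_eq_fderiv_apply (hF x)]

theorem divg_indicator (hΩ : IsOpen Ω) (hF : Differentiable ℝ F)
    (hF0 : ∀ x ∈ frontier Ω, F x = 0) (hF'0 : ∀ x ∈ frontier Ω, fderiv ℝ F x = 0) :
    divg (Ω.indicator F) = Ω.indicator (divg F) := by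
  funext x
  by_cases hx : x ∈ Ω <;> simp [divg, gradEntry_indicator hΩ hF hF0 hF'0, hx]

theorem setIntegral_divg_eq_zero (hΩo : IsOpen Ω) (hΩb : Bornology.IsBounded Ω)
    (hF : ContDiff ℝ 1 F) (hF0 : ∀ x ∈ frontier Ω, F x = 0)
    (hF'0 : ∀ x ∈ frontier Ω, fderiv ℝ F x = 0) : ∫ x in Ω, divg F x = 0 := by
  have hF₁ := hF.differentiable one_ne_zero
  rw [← integral_indicator hΩo.measurableSet, ← divg_indicator hΩo hF₁ hF0 hF'0]
  refine integral_divg_eq_zero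
    (fun x => (hasFDerivAt_indicator_of_frontier hΩo hF₁ hF0 hF'0 x).differentiableAt) ?_
    fun j => ?_
  · exact (hF.continuous.integrableOn_of_isBounded hΩb).integrable_indicator hΩo.measurableSet
  · rw [gradEntry_indicator hΩo hF₁ hF0 hF'0]
    exact ((continuous_gradEntry hF j j).integrableOn_of_isBounded hΩb).integrable_indicator
      hΩo.measurableSet

end Divergence

noncomputable def emacFlux {d : ℕ} (w φ : (Fin d → ℝ) → Fin d → ℝ) (y : Fin d → ℝ) : Fin d → ℝ :=
  (w y ⬝ᵥ φ y) • w y + ((1 / 2) * (w y ⬝ᵥ w y)) • φ y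

section EmacFlux

variable {d : ℕ} {w φ : (Fin d → ℝ) → Fin d → ℝ} {x : Fin d → ℝ}

theorem contDiff_emacFlux (hw : ContDiff ℝ 1 w) (hφ : ContDiff ℝ 1 φ) :
    ContDiff ℝ 1 (emacFlux w φ) := by
  unfold emacFlux dotProduct
  fun_prop

theorem differentiableAt_emacFlux (hw : DifferentiableAt ℝ w x) (hφ : DifferentiableAt ℝ φ x) :
    DifferentiableAt ℝ (emacFlux w φ) x := by
  unfold emacFlux
  exact (((hw.dotProduct hφ).smul hw).add (((hw.dotProduct hw).const_mul _).smul hφ))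

theorem fderiv_emacFlux_apply (hw : DifferentiableAt ℝ w x) (hφ : DifferentiableAt ℝ φ x)
    (v : Fin d → ℝ) : fderiv ℝ (emacFlux w φ) x v =
      (fderiv ℝ w x v ⬝ᵥ φ x + w x ⬝ᵥ fderiv ℝ φ x v) • w x + (w x ⬝ᵥ φ x) • fderiv ℝ w x v
        + (w x ⬝ᵥ fderiv ℝ w x v) • φ x + ((1 / 2) * (w x ⬝ᵥ w x)) • fderiv ℝ φ x v := by
  have hwφ := (hw.dotProduct hφ).hasFDerivAt.smul hw.hasFDerivAt
  have hww := ((hw.dotProduct hw).hasFDerivAt.const_mul (1 / 2 : ℝ)).smul hφ.hasFDerivAt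
  change fderiv ℝ ((fun y => w y ⬝ᵥ φ y) • w + (fun y => 1 / 2 * w y ⬝ᵥ w y) • φ) x v = _
  rw [(hwφ.add hww).fderiv]
  simp only [_root_.add_apply, _root_.smul_apply,
    ContinuousLinearMap.smulRight_apply, fderiv_dotProduct_apply hw hφ,
    fderiv_dotProduct_apply hw hw, dotProduct_comm (fderiv ℝ w x v) (w x)]
  module

theorem emacFlux_eq_zero (hx : w x = 0) : emacFlux w φ x = 0 := by
  simp [emacFlux, hx]

theorem fderiv_emacFlux_eq_zero (hw : DifferentiableAt ℝ w x) (hφ : DifferentiableAt ℝ φ x)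
    (hx : w x = 0) : fderiv ℝ (emacFlux w φ) x = 0 := by
  ext1 v
  simp [fderiv_emacFlux_apply hw hφ, hx]

theorem two_mul_sum_symGrad_mul (hw : DifferentiableAt ℝ w x) (u v : Fin d → ℝ) :
    2 * ∑ i, (∑ j, symGrad w i j x * v j) * u i =
      fderiv ℝ w x v ⬝ᵥ u + v ⬝ᵥ fderiv ℝ w x u := by
  have hrow : ∀ i, ∑ j, symGrad w i j x * v j =
      (1 / 2) * (fderiv ℝ w x v i + fderiv ℝ w x (Pi.single i 1) ⬝ᵥ v) := by
    intro i
    rw [← sum_apply_single_apply_mul (fderiv ℝ w x) v i]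
    simp only [symGrad, gradEntry_eq_fderiv_apply hw, dotProduct, mul_add, add_mul,
      Finset.sum_add_distrib, Finset.mul_sum, mul_assoc]
  calc 2 * ∑ i, (∑ j, symGrad w i j x * v j) * u i
      = ∑ i, fderiv ℝ w x v i * u i + ∑ i, (fderiv ℝ w x (Pi.single i 1) ⬝ᵥ v) * u i := by
        simp only [hrow, Finset.mul_sum, ← Finset.sum_add_distrib]
        exact Finset.sum_congr rfl fun i _ => by ring
    _ = fderiv ℝ w x v ⬝ᵥ u + v ⬝ᵥ fderiv ℝ w x u := by
        rw [sum_apply_single_dotProduct_mul, dotProduct_comm (fderiv ℝ w x u)]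
        rfl

theorem divg_emacFlux (hw : DifferentiableAt ℝ w x) (hφ : DifferentiableAt ℝ φ x)
    (hskew : ∀ u, u ⬝ᵥ fderiv ℝ φ x u = 0) :
    divg (emacFlux w φ) x =
      2 * ∑ i, (∑ j, symGrad w i j x * w x j) * φ x i + divg w x * ∑ i, w x i * φ x i := by
  have htrace : ∑ j, fderiv ℝ φ x (Pi.single j 1) j = 0 :=
    Finset.sum_eq_zero fun j _ => by simpa [single_one_dotProduct] using hskew (Pi.single j 1)
  rw [divg_eq_sum_fderiv_apply (differentiableAt_emacFlux hw hφ), divg_eq_sum_fderiv_apply hw,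
    two_mul_sum_symGrad_mul hw]
  simp only [fderiv_emacFlux_apply hw hφ, Pi.add_apply, Pi.smul_apply, smul_eq_mul,
    Finset.sum_add_distrib, add_mul, sum_apply_single_dotProduct_mul,
    sum_dotProduct_apply_single_mul, hskew, ← Finset.mul_sum, htrace, mul_zero, add_zero]
  change _ = _ + _ * (w x ⬝ᵥ φ x)
  ring

theorem emacC_self_eq_setIntegral_divg_emacFlux {Ω : Set (Fin d → ℝ)} (hΩo : IsOpen Ω)
    (hΩb : Bornology.IsBounded Ω) (hw : ContDiff ℝ 1 w) (hφ : ContDiff ℝ 1 φ)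
    (hskew : ∀ x ∈ Ω, ∀ u, u ⬝ᵥ fderiv ℝ φ x u = 0) :
    emacC Ω w w φ = ∫ x in Ω, divg (emacFlux w φ) x := by
  have hgrad := continuous_gradEntry hw
  have hwc := hw.continuous
  have hφc := hφ.continuous
  have hsym : Continuous fun x => ∑ i, (∑ j, symGrad w i j x * w x j) * φ x i := by
    unfold symGrad
    fun_prop
  have hdiv : Continuous fun x => divg w x * ∑ i, w x i * φ x i := by
    unfold divg
    fun_prop
  rw [emacC, ← integral_const_mul, ← integral_add
    ((hsym.integrableOn_of_isBounded hΩb).const_mul 2) (hdiv.integrableOn_of_isBounded hΩb)]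
  refine setIntegral_congr_fun hΩo.measurableSet fun x hx => ?_
  exact (divg_emacFlux (hw.differentiable one_ne_zero x) (hφ.differentiable one_ne_zero x)
    (hskew x hx)).symm

end EmacFlux

theorem hasFDerivAt_crossProduct_const (e x : Fin 3 → ℝ) :
    HasFDerivAt (fun y => y ⨯₃ e) (LinearMap.toContinuousLinearMap (crossProduct.flip e)) x :=
  (LinearMap.toContinuousLinearMap (crossProduct.flip e)).hasFDerivAt

theorem contDiff_crossProduct_const (e : Fin 3 → ℝ) : ContDiff ℝ 1 fun y : Fin 3 → ℝ => y ⨯₃ e :=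
  (LinearMap.toContinuousLinearMap (crossProduct.flip e)).contDiff

/-- Angular momentum conservation of the EMAC nonlinearity: for `φ_i(x) = x × e_i`,
`c(w, w, φ_i) = 0` even when `div w ≠ 0`, for `w` a C¹ field vanishing on `∂Ω`. -/
theorem stmt6 (Ω : Set (Fin 3 → ℝ)) (hΩo : IsOpen Ω)
    (hΩb : Bornology.IsBounded Ω)
    (w : (Fin 3 → ℝ) → Fin 3 → ℝ) (hw : ContDiff ℝ 1 w)
    (hwb : ∀ x ∈ frontier Ω, w x = 0) (i : Fin 3) :
    emacC Ω w w (fun x => crossProduct x (Pi.single i (1 : ℝ))) = 0 := by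
  set e : Fin 3 → ℝ := Pi.single i 1
  have hφ := contDiff_crossProduct_const e
  have hskew : ∀ x ∈ Ω, ∀ u, u ⬝ᵥ fderiv ℝ (fun y => y ⨯₃ e) x u = 0 := fun x _ u => by
    rw [(hasFDerivAt_crossProduct_const e x).fderiv]
    exact dot_self_cross u e
  rw [emacC_self_eq_setIntegral_divg_emacFlux hΩo hΩb hw hφ hskew]
  have hw₁ := hw.differentiable one_ne_zero
  exact setIntegral_divg_eq_zero hΩo hΩb (contDiff_emacFlux hw hφ)
    (fun x hx => emacFlux_eq_zero (hwb x hx))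
    (fun x hx => fderiv_emacFlux_eq_zero (hw₁ x) (hφ.differentiable one_ne_zero x) (hwb x hx))
end
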